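/- For the metric g = r^{-2}(1-r^{-3})^{-1} dr² + r²(1-r^{-3}) dξ² + r² dθ² on [r_h, r_0] × T², the boundary torus Σ = {r = r_0} has mean curvature H = (1-r_0^{-3})^{-1/2}(2 - ½ r_0^{-3}) with respect to the outward normal ∂_r direction, and area element dA = r_0² √(1-r_0^{-3}) dξ dθ. -/

import Mathlib

noncomputable section

/-- Mean curvature of the constant-`r` torus in the diagonal metric
`g = A(r)dr² + B(r)dξ² + C(r)dθ²`, with respect to the outward unit normal
`A^{-1/2}∂_r`: trace of the second fundamental form,
`H = (1/(2√A))(B'/B + C'/C)`. -/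
def meanCurvDiag (A B C : ℝ → ℝ) (r : ℝ) : ℝ :=
  (1 / (2 * Real.sqrt (A r))) * (deriv B r / B r + deriv C r / C r)

/-- Area element density `√(BC)` of the constant-`r` torus in coordinates `ξ, θ`. -/
def areaDensityDiag (B C : ℝ → ℝ) (r : ℝ) : ℝ :=
  Real.sqrt (B r * C r)

/-!
Write the metric as `r⁻²f⁻¹ dr² + r²f dξ² + r² dθ²` with `f = 1 - r⁻³`. For any such `f`,
`√A = r⁻¹ f^{-1/2}`, `B'/B = 2/r + f'/f` and `C'/C = 2/r`, so `H = f^{-1/2}(2f + r f'/2)` and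
`√(BC) = r²√f`. With `f' = 3r⁻⁴` one gets `2f + r f'/2 = 2 - ½ r⁻³`.
-/

open Real

lemma sqrt_zpow_neg_two_mul_inv {r : ℝ} (hr : 0 < r) (a : ℝ) :
    √(r ^ (-2 : ℤ) * a⁻¹) = r⁻¹ * (√a)⁻¹ := by
  rw [zpow_neg, ← mul_inv, sqrt_inv, sqrt_mul (by positivity), zpow_ofNat, sqrt_sq hr.le, mul_inv]

theorem meanCurvDiag_warped {f : ℝ → ℝ} {f' r : ℝ} (hf : HasDerivAt f f' r) (hr : 0 < r)
    (hfr : 0 < f r) :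
    meanCurvDiag (fun r => r ^ (-2 : ℤ) * (f r)⁻¹) (fun r => r ^ 2 * f r) (fun r => r ^ 2) r
      = (√(f r))⁻¹ * (2 * f r + r * f' / 2) := by
  have hsq : HasDerivAt (fun r : ℝ => r ^ 2) (2 * r) r := by simpa using hasDerivAt_pow 2 r
  have hsqrt_sq : √(f r) ^ 2 = f r := sq_sqrt hfr.le
  have hB : HasDerivAt (fun r => r ^ 2 * f r) (2 * r * f r + r ^ 2 * f') r := hsq.mul hf
  rw [meanCurvDiag, hB.deriv, hsq.deriv, sqrt_zpow_neg_two_mul_inv hr]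
  field_simp
  rw [hsqrt_sq]
  ring

theorem areaDensityDiag_warped (f : ℝ → ℝ) (r : ℝ) :
    areaDensityDiag (fun r => r ^ 2 * f r) (fun r => r ^ 2) r = r ^ 2 * √(f r) := by
  rw [areaDensityDiag, mul_right_comm, ← sq, sqrt_mul (by positivity), sqrt_sq (by positivity)]

lemma hasDerivAt_one_sub_zpow_neg_three {r : ℝ} (hr : r ≠ 0) :
    HasDerivAt (fun r : ℝ => 1 - r ^ (-3 : ℤ)) (3 * r ^ (-4 : ℤ)) r :=
  ((hasDerivAt_zpow (-3) r (Or.inl hr)).const_sub 1).congr_deriv (by norm_num)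

lemma one_sub_zpow_neg_three_pos {r : ℝ} (hr : 1 < r) : 0 < 1 - r ^ (-3 : ℤ) := by
  have : r ^ (-3 : ℤ) < 1 := zpow_lt_one_of_neg₀ hr (by norm_num)
  linarith

/-- for `g = r^{-2}(1-r^{-3})^{-1}dr² + r²(1-r^{-3})dξ² + r²dθ²`,
the boundary torus `Σ = {r = r_0}` has mean curvature
`H = (1-r_0^{-3})^{-1/2}(2 - ½r_0^{-3})` with respect to the outward normal, and
area element `dA = r_0²√(1-r_0^{-3}) dξ dθ`. -/
theorem horowitz_myers_boundary_mean_curvature_and_area (r0 : ℝ) (hr0 : 1 < r0) :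
    meanCurvDiag
        (fun r => r ^ (-2 : ℤ) * (1 - r ^ (-3 : ℤ))⁻¹)
        (fun r => r ^ 2 * (1 - r ^ (-3 : ℤ)))
        (fun r => r ^ 2) r0
      = (Real.sqrt (1 - r0 ^ (-3 : ℤ)))⁻¹ * (2 - (1/2) * r0 ^ (-3 : ℤ)) ∧
    areaDensityDiag
        (fun r => r ^ 2 * (1 - r ^ (-3 : ℤ)))
        (fun r => r ^ 2) r0
      = r0 ^ 2 * Real.sqrt (1 - r0 ^ (-3 : ℤ)) := by
  have hpos : 0 < r0 := zero_lt_one.trans hr0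
  have hf := one_sub_zpow_neg_three_pos hr0
  refine ⟨?_, areaDensityDiag_warped _ _⟩
  rw [meanCurvDiag_warped (hasDerivAt_one_sub_zpow_neg_three hpos.ne') hpos hf]
  have hzpow : r0 * r0 ^ (-4 : ℤ) = r0 ^ (-3 : ℤ) := by
    rw [← zpow_one_add₀ hpos.ne']; norm_num
  congr 1
  linear_combination (3 / 2 : ℝ) * hzpow

end
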